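/- arXiv:2104.14172 — 4 statements merged into one kernel-verified Lean document; each statement's English description precedes it below -/
import Mathlib

section
/- If v is a dominant vertex of a graph G (adjacent to all other vertices), then A(G) = A(G − v) + 1. -/
/-!
A dominant vertex `v` is adjacent to every other vertex, so it is a singleton block of every
partition of `G` into independent sets. Deleting that block is a bijection onto the partitions
of `G - v`, lowering the number of blocks by one. Hence `B(G) = B(G - v)` and
`T(G) = T(G - v) + B(G - v)`; divide, using `B(G - v) > 0`.
-/

open Finset

/-- A partition of the vertex set of `G` into independent (stable) sets. -/
def IsStablePartition {V : Type*} [Fintype V] [DecidableEq V] (G : SimpleGraph V)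
    (P : Finpartition (Finset.univ : Finset V)) : Prop :=
  ∀ p ∈ P.parts, ∀ u ∈ p, ∀ v ∈ p, ¬ G.Adj u v

/-- `colS G k` : number of non-equivalent colorings of `G` with exactly `k` colors. -/
noncomputable def colS {V : Type*} [Fintype V] [DecidableEq V] (G : SimpleGraph V) (k : ℕ) : ℕ :=
  Set.ncard {P : Finpartition (Finset.univ : Finset V) |
    IsStablePartition G P ∧ P.parts.card = k}

/-- `colB G` : total number of non-equivalent colorings of `G`. -/
noncomputable def colB {V : Type*} [Fintype V] [DecidableEq V] (G : SimpleGraph V) : ℕ :=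
  ∑ k ∈ Finset.range (Fintype.card V + 1), colS G k

/-- `colT G` : total number of color classes over all non-equivalent colorings of `G`. -/
noncomputable def colT {V : Type*} [Fintype V] [DecidableEq V] (G : SimpleGraph V) : ℕ :=
  ∑ k ∈ Finset.range (Fintype.card V + 1), k * colS G k

/-- `colA G` : average number of colors in the non-equivalent colorings of `G`. -/
noncomputable def colA {V : Type*} [Fintype V] [DecidableEq V] (G : SimpleGraph V) : ℚ :=
  (colT G : ℚ) / (colB G : ℚ)

/-- Disjoint union of two graphs. -/
def graphUnion {V W : Type*} (G : SimpleGraph V) (H : SimpleGraph W) : SimpleGraph (V ⊕ W) where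
  Adj a b := match a, b with
    | Sum.inl x, Sum.inl y => G.Adj x y
    | Sum.inr x, Sum.inr y => H.Adj x y
    | _, _ => False
  symm := ⟨by rintro (x|x) (y|y) h <;> first | exact h.symm | exact h.elim⟩
  loopless := ⟨by rintro (x|x) h <;> first | exact G.loopless.irrefl x h | exact H.loopless.irrefl x h⟩

/-- Join of two graphs: disjoint union plus all cross edges. -/
def graphJoin {V W : Type*} (G : SimpleGraph V) (H : SimpleGraph W) : SimpleGraph (V ⊕ W) where
  Adj a b := match a, b with
    | Sum.inl x, Sum.inl y => G.Adj x y
    | Sum.inr x, Sum.inr y => H.Adj x y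
    | _, _ => True
  symm := ⟨by rintro (x|x) (y|y) h <;> first | exact h.symm | trivial⟩
  loopless := ⟨by rintro (x|x) h <;> first | exact G.loopless.irrefl x h | exact H.loopless.irrefl x h⟩

/-- Deletion of a vertex. -/
def deleteVertex {V : Type*} (G : SimpleGraph V) (v : V) : SimpleGraph {x : V // x ≠ v} :=
  G.induce {x : V | x ≠ v}

namespace Finpartition

variable {α β : Type*} [DecidableEq α] [DecidableEq β]

@[simps]
def finsetMap (f : α ↪ β) {s : Finset α} (P : Finpartition s) : Finpartition (s.map f) where
  parts := P.parts.map (mapEmbedding f).toEmbedding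
  supIndep := by
    rw [supIndep_iff_pairwiseDisjoint, coe_map]
    rintro _ ⟨p, hp, rfl⟩ _ ⟨q, hq, rfl⟩ hpq
    exact (disjoint_map f).2 (P.disjoint hp hq (ne_of_apply_ne _ hpq))
  sup_parts := by
    conv_rhs => rw [← P.sup_parts]
    rw [sup_map, apply_sup_eq_sup_comp _ (fun _ _ => map_union _ _) (map_empty f)]
    rfl
  bot_notMem := by simp

lemma notMem_of_mem_erase_singleton {s : Finset α} {P : Finpartition s} {a : α}
    (ha : {a} ∈ P.parts) {q : Finset α} (hq : q ∈ P.parts.erase {a}) : a ∉ q := fun haq =>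
  (mem_erase.1 hq).1 (P.eq_of_mem_parts (mem_of_mem_erase hq) ha haq (mem_singleton_self a))

end Finpartition

section DominantVertex

variable {V : Type*} [Fintype V] [DecidableEq V]

section SingletonPart

variable (v : V)

def insertSingletonPart (P : Finpartition (univ : Finset {x : V // x ≠ v})) :
    Finpartition (univ : Finset V) :=
  (P.finsetMap (Function.Embedding.subtype _)).extend (singleton_ne_empty v)
    (disjoint_singleton_right.2 (by simp)) (by ext x; by_cases x = v <;> simp_all)

lemma parts_insertSingletonPart (P : Finpartition (univ : Finset {x : V // x ≠ v})) :
    (insertSingletonPart v P).parts =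
      insert {v} (P.parts.map (mapEmbedding (Function.Embedding.subtype _)).toEmbedding) :=
  rfl

lemma card_parts_insertSingletonPart (P : Finpartition (univ : Finset {x : V // x ≠ v})) :
    #(insertSingletonPart v P).parts = #P.parts + 1 := by
  rw [insertSingletonPart, Finpartition.card_extend, Finpartition.finsetMap_parts, card_map]

lemma insertSingletonPart_injective : Function.Injective (insertSingletonPart v) := by
  have hv_notMem (P : Finpartition (univ : Finset {x : V // x ≠ v})) :
      {v} ∉ P.parts.map (mapEmbedding (Function.Embedding.subtype _)).toEmbedding := by
    intro hmem
    obtain ⟨p, -, hp⟩ := mem_map.1 hmem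
    have : v ∈ p.map (Function.Embedding.subtype _) := by
      rw [← mapEmbedding_apply, ← RelEmbedding.coe_toEmbedding, hp]; exact mem_singleton_self v
    simp at this
  intro P Q h
  have h' := congrArg (fun R => R.parts.erase {v}) h
  simp only [parts_insertSingletonPart, erase_insert (hv_notMem P), erase_insert (hv_notMem Q),
    map_inj] at h'
  exact Finpartition.ext h'

def eraseSingletonPart (Q : Finpartition (univ : Finset V)) (hQ : {v} ∈ Q.parts) :
    Finpartition (univ : Finset {x : V // x ≠ v}) where
  parts := (Q.parts.erase {v}).image (Finset.subtype (· ≠ v))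
  supIndep := by
    rw [supIndep_iff_pairwiseDisjoint, coe_image]
    rintro _ ⟨p, hp, rfl⟩ _ ⟨q, hq, rfl⟩ hpq
    have := Q.disjoint (mem_of_mem_erase hp) (mem_of_mem_erase hq) (ne_of_apply_ne _ hpq)
    exact disjoint_left.2 fun x hxp hxq =>
      disjoint_left.1 this (mem_subtype.1 hxp) (mem_subtype.1 hxq)
  sup_parts := by
    refine eq_univ_of_forall fun x => mem_sup.2 ?_
    obtain ⟨q, hq, hxq⟩ := Q.exists_mem (mem_univ (x : V))
    have hqv : q ≠ {v} := by rintro rfl; exact x.2 (mem_singleton.1 hxq)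
    exact ⟨_, mem_image_of_mem _ (mem_erase.2 ⟨hqv, hq⟩), mem_subtype.2 hxq⟩
  bot_notMem := fun h => by
    obtain ⟨q, hq, hq_empty⟩ := mem_image.1 h
    obtain ⟨a, ha⟩ := Q.nonempty_of_mem_parts (mem_of_mem_erase hq)
    have hav : a ≠ v := fun hav => Finpartition.notMem_of_mem_erase_singleton hQ hq (hav ▸ ha)
    have : (⟨a, hav⟩ : {x : V // x ≠ v}) ∈ q.subtype (· ≠ v) := mem_subtype.2 ha
    rw [hq_empty] at this
    exact notMem_empty _ this

lemma exists_insertSingletonPart_eq {Q : Finpartition (univ : Finset V)} (hQ : {v} ∈ Q.parts) :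
    ∃ P, insertSingletonPart v P = Q := by
  refine ⟨eraseSingletonPart v Q hQ, Finpartition.ext ?_⟩
  have hmap : Set.EqOn ((mapEmbedding (Function.Embedding.subtype (· ≠ v))).toEmbedding ∘
      Finset.subtype (· ≠ v)) id (Q.parts.erase {v}) :=
    fun q hq => subtype_map_of_mem fun x hx hxv =>
      Finpartition.notMem_of_mem_erase_singleton hQ hq (hxv ▸ hx)
  rw [parts_insertSingletonPart, eraseSingletonPart, map_eq_image, image_image,
    image_congr hmap, image_id, insert_erase hQ]

lemma isStablePartition_insertSingletonPart_iff (G : SimpleGraph V)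
    (P : Finpartition (univ : Finset {x : V // x ≠ v})) :
    IsStablePartition G (insertSingletonPart v P) ↔ IsStablePartition (deleteVertex G v) P := by
  simp only [IsStablePartition, parts_insertSingletonPart, forall_mem_insert, mem_singleton,
    forall_eq, G.loopless.irrefl, not_false_eq_true, forall_mem_map, true_and,
    RelEmbedding.coe_toEmbedding, mapEmbedding_apply, Function.Embedding.coe_subtype]
  rfl

end SingletonPart

lemma singleton_mem_parts_of_isStablePartition {G : SimpleGraph V} {v : V}
    (hv : ∀ w, w ≠ v → G.Adj v w) {Q : Finpartition (univ : Finset V)}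
    (hQ : IsStablePartition G Q) : {v} ∈ Q.parts := by
  obtain ⟨q, hq, hvq⟩ := Q.exists_mem (mem_univ v)
  suffices q = {v} from this ▸ hq
  exact eq_singleton_iff_unique_mem.2
    ⟨hvq, fun w hw => by_contra fun hwv => hQ q hq v hvq w hw (hv w hwv)⟩

lemma colS_succ_of_dominant (G : SimpleGraph V) (v : V) (hv : ∀ w, w ≠ v → G.Adj v w)
    (k : ℕ) : colS G (k + 1) = colS (deleteVertex G v) k := by
  have himage : {Q : Finpartition (univ : Finset V) | IsStablePartition G Q ∧ #Q.parts = k + 1} =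
      insertSingletonPart v '' {P | IsStablePartition (deleteVertex G v) P ∧ #P.parts = k} := by
    ext Q
    constructor
    · rintro ⟨hQ, hcard⟩
      obtain ⟨P, rfl⟩ :=
        exists_insertSingletonPart_eq v (singleton_mem_parts_of_isStablePartition hv hQ)
      rw [isStablePartition_insertSingletonPart_iff] at hQ
      rw [card_parts_insertSingletonPart] at hcard
      exact ⟨P, ⟨hQ, by omega⟩, rfl⟩
    · rintro ⟨P, ⟨hP, hcard⟩, rfl⟩
      exact ⟨(isStablePartition_insertSingletonPart_iff v G P).2 hP,
        by rw [card_parts_insertSingletonPart, hcard]⟩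
  rw [colS, colS, himage, Set.ncard_image_of_injective _ (insertSingletonPart_injective v)]

lemma colS_zero [Nonempty V] (G : SimpleGraph V) : colS G 0 = 0 := by
  rw [colS, Set.ncard_eq_zero]
  refine Set.eq_empty_of_forall_notMem fun P ⟨_, hP⟩ => ?_
  exact univ_nonempty.ne_empty (P.parts_eq_empty_iff.1 (card_eq_zero.1 hP))

lemma isStablePartition_bot (G : SimpleGraph V) : IsStablePartition G ⊥ := by
  intro p hp u hu w hw
  obtain ⟨a, -, rfl⟩ := Finpartition.mem_bot_iff.1 hp
  rw [mem_singleton.1 hu, mem_singleton.1 hw]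
  exact G.loopless.irrefl a

lemma colB_pos (G : SimpleGraph V) : 0 < colB G := by
  have hS : 0 < colS G (Fintype.card V) := (Set.ncard_pos (Set.toFinite _)).2
    ⟨⊥, isStablePartition_bot G, by rw [Finpartition.card_bot, card_univ]⟩
  exact hS.trans_le (single_le_sum (fun _ _ => Nat.zero_le _) (self_mem_range_succ _))

lemma colA_eq_add_one_of_colS_succ {W : Type*} [Fintype W] [DecidableEq W]
    (G : SimpleGraph V) (H : SimpleGraph W) (hcard : Fintype.card V = Fintype.card W + 1)
    (hS : ∀ k, colS G (k + 1) = colS H k) : colA G = colA H + 1 := by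
  have : Nonempty V := Fintype.card_pos_iff.1 (by omega)
  have hB : colB G = colB H := by
    rw [colB, colB, hcard, sum_range_succ', colS_zero, add_zero]
    exact sum_congr rfl fun k _ => hS k
  have hT : colT G = colT H + colB H := by
    rw [colT, colT, colB, hcard, sum_range_succ', zero_mul, add_zero, ← sum_add_distrib]
    exact sum_congr rfl fun k _ => by rw [hS k, add_mul, one_mul]
  have hB_ne : (colB H : ℚ) ≠ 0 := by exact_mod_cast (colB_pos H).ne'
  rw [colA, colA, hT, hB, Nat.cast_add, add_div, div_self hB_ne]

end DominantVertex

theorem stmt3 {V : Type*} [Fintype V] [DecidableEq V] (G : SimpleGraph V) (v : V)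
    (hv : ∀ w : V, w ≠ v → G.Adj v w) :
    colA G = colA (deleteVertex G v) + 1 :=
  colA_eq_add_one_of_colS_succ G (deleteVertex G v)
    ((Fintype.card_congr (Equiv.optionSubtypeNe v)).symm.trans Fintype.card_option)
    (colS_succ_of_dominant G v hv)
end

section
/- Let v be a vertex in a finite simple graph G with neighborhood N(v). If the chromatic number of the subgraph induced by N(v) is at least |N(v)| − 3, then A(G) > A(G − v). -/
open Finset

/-!
A stable partition `P'` of `G - v` with `k` blocks, `c` of which contain no neighbour of `v`,
extends to `G` in exactly `1 + c` ways: `v` as a new singleton block (`k + 1` blocks) or `v`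
added to one of those `c` blocks (`k` blocks). The remaining `i = k - c` blocks meet `N(v)`, so
`χ(G[N(v)]) ≤ i ≤ deg v`, and the hypothesis forces `i` to vary by at most `3` over all `P'`.
Writing `A(G) = T/B`, one finds
`T(G) B(G - v) - T(G - v) B(G) = ∑_{x,y} ((k_x - k_y)(1 + c_x) + 1)`.
Pairing the terms `(x, y)` and `(y, x)` gives `a (a - e) + 2` with `a = k_x - k_y` and
`e = i_x - i_y`, `|e| ≤ 3`, which is at least `(|a| - 1)(|a| - 2) ≥ 0`; the diagonal terms
are `1`.
-/

section StablePartitions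

variable {V : Type*} [Fintype V] [DecidableEq V]

open Classical in
noncomputable def stablePartitions (G : SimpleGraph V) : Finset (Finpartition (univ : Finset V)) :=
  {P | IsStablePartition G P}

@[simp]
lemma mem_stablePartitions {G : SimpleGraph V} {P : Finpartition (univ : Finset V)} :
    P ∈ stablePartitions G ↔ IsStablePartition G P := by
  simp [stablePartitions]

lemma stablePartitions_nonempty (G : SimpleGraph V) : (stablePartitions G).Nonempty :=
  ⟨⊥, mem_stablePartitions.mpr (isStablePartition_bot G)⟩

lemma colS_eq_card (G : SimpleGraph V) (k : ℕ) :
    colS G k = #{P ∈ stablePartitions G | #P.parts = k} := by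
  rw [colS, ← Set.ncard_coe_finset]
  congr
  ext P
  simp

lemma card_parts_mem_range (P : Finpartition (univ : Finset V)) :
    #P.parts ∈ range (Fintype.card V + 1) :=
  mem_range_succ_iff.mpr P.card_parts_le_card

lemma colB_eq_card (G : SimpleGraph V) : colB G = #(stablePartitions G) := by
  simp_rw [colB, colS_eq_card]
  exact (card_eq_sum_card_fiberwise fun P _ ↦ card_parts_mem_range P).symm

lemma colT_eq_sum (G : SimpleGraph V) : colT G = ∑ P ∈ stablePartitions G, #P.parts := by
  rw [colT, ← sum_fiberwise_of_maps_to fun P _ ↦ card_parts_mem_range P]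
  refine sum_congr rfl fun k _ ↦ ?_
  rw [colS_eq_card, sum_congr rfl fun P hP ↦ (mem_filter.mp hP).2, sum_const, smul_eq_mul,
    mul_comm]

end StablePartitions

lemma Int.mul_sub_add_two_nonneg (a : ℤ) {e : ℤ} (he : |e| ≤ 3) : 0 ≤ a * (a - e) + 2 := by
  obtain ⟨he₁, he₂⟩ := abs_le.mp he
  rcases le_or_gt 2 a with ha | ha
  · nlinarith [mul_nonneg (sub_nonneg.mpr ha) (show (0 : ℤ) ≤ a - 1 by linarith)]
  rcases le_or_gt a (-2) with ha' | ha'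
  · nlinarith [mul_nonneg (show (0 : ℤ) ≤ -a - 2 by linarith)
      (show (0 : ℤ) ≤ -a - 1 by linarith)]
  interval_cases a <;> omega

lemma Finset.sum_sum_pos_of_add_swap_nonneg {R ι : Type*} [CommRing R] [LinearOrder R]
    [IsStrictOrderedRing R] {s : Finset ι} (hs : s.Nonempty) (g : ι → ι → R)
    (hdiag : ∀ x ∈ s, 0 < g x x) (hswap : ∀ x ∈ s, ∀ y ∈ s, 0 ≤ g x y + g y x) :
    0 < ∑ x ∈ s, ∑ y ∈ s, g x y := by
  have hsym : 2 * ∑ x ∈ s, ∑ y ∈ s, g x y = ∑ x ∈ s, ∑ y ∈ s, (g x y + g y x) := by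
    rw [two_mul]
    nth_rw 2 [sum_comm]
    simp only [← sum_add_distrib]
  have hpos : 0 < ∑ x ∈ s, ∑ y ∈ s, (g x y + g y x) :=
    sum_pos (fun x hx ↦ lt_of_lt_of_le (add_pos (hdiag x hx) (hdiag x hx))
      (single_le_sum (fun y hy ↦ hswap x hx y hy) hx)) hs
  linarith

lemma sum_div_card_lt_sum_div_sum {ι : Type*} {s : Finset ι} (hs : s.Nonempty) (k c : ι → ℕ)
    (h : ∀ x ∈ s, ∀ y ∈ s, |((k x : ℤ) - c x) - ((k y : ℤ) - c y)| ≤ 3) :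
    ((∑ x ∈ s, k x : ℕ) : ℚ) / #s <
      ((∑ x ∈ s, (k x + 1 + c x * k x) : ℕ) : ℚ) / (∑ x ∈ s, (1 + c x) : ℕ) := by
  have hcard : (0 : ℚ) < #s := by exact_mod_cast hs.card_pos
  have hden : (0 : ℚ) < (∑ x ∈ s, (1 + c x) : ℕ) := by
    exact_mod_cast sum_pos (fun _ _ ↦ by omega) hs
  rw [div_lt_div_iff₀ hcard hden]
  suffices (∑ x ∈ s, (k x : ℤ)) * ∑ x ∈ s, (1 + (c x : ℤ)) <
      (∑ x ∈ s, ((k x : ℤ) + 1 + c x * k x)) * #s by exact_mod_cast this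
  have hexpand : (∑ x ∈ s, ((k x : ℤ) + 1 + c x * k x)) * #s -
      (∑ x ∈ s, (k x : ℤ)) * ∑ x ∈ s, (1 + (c x : ℤ)) =
        ∑ x ∈ s, ∑ y ∈ s, (((k x : ℤ) - k y) * (1 + c x) + 1) := by
    rw [card_eq_sum_ones, Nat.cast_sum, sum_mul_sum, sum_mul_sum, sum_comm (s := s) (t := s)
      (f := fun x y ↦ (k x : ℤ) * (1 + c y)), ← sum_sub_distrib]
    refine sum_congr rfl fun x _ ↦ ?_
    rw [← sum_sub_distrib]
    exact sum_congr rfl fun y _ ↦ by push_cast; ring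
  have hpos := sum_sum_pos_of_add_swap_nonneg hs (fun x y ↦ ((k x : ℤ) - k y) * (1 + c x) + 1)
    (fun x _ ↦ by simp) fun x hx y hy ↦ by
      have := Int.mul_sub_add_two_nonneg ((k x : ℤ) - k y) (h x hx y hy)
      linarith
  linarith

namespace Finset

variable {α : Type*} {p : α → Prop} [DecidablePred p]

@[simp]
lemma subtype_map_subtype (s : Finset (Subtype p)) :
    (s.map (Function.Embedding.subtype p)).subtype p = s := by
  ext x
  simp [x.2]

lemma disjoint_subtype {s t : Finset α} (h : Disjoint s t) :
    Disjoint (s.subtype p) (t.subtype p) :=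
  disjoint_left.mpr fun _ hs ht ↦ disjoint_left.mp h (mem_subtype.mp hs) (mem_subtype.mp ht)

lemma subtype_insert_of_neg [DecidableEq α] {a : α} (ha : ¬ p a) (s : Finset α) :
    (insert a s).subtype p = s.subtype p := by
  ext x
  simp only [mem_subtype, mem_insert, or_iff_right_iff_imp]
  rintro rfl
  exact absurd x.2 ha

end Finset

namespace Finpartition

open Function

variable {V : Type*} [Fintype V] [DecidableEq V] {v : V}

def erasePoint (v : V) (P : Finpartition (univ : Finset V)) :
    Finpartition (univ : Finset {x // x ≠ v}) :=
  ofErase (P.parts.image (·.subtype (· ≠ v)))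
    (by
      rw [supIndep_iff_pairwiseDisjoint]
      rintro _ hp' _ hq' hpq
      obtain ⟨p, hp, rfl⟩ := mem_image.mp hp'
      obtain ⟨q, hq, rfl⟩ := mem_image.mp hq'
      exact disjoint_subtype (P.disjoint hp hq fun h ↦ hpq (h ▸ rfl)))
    (eq_univ_of_forall fun a ↦ by
      obtain ⟨p, hp, hap⟩ := P.exists_mem (mem_univ (a : V))
      exact mem_sup.mpr ⟨_, mem_image_of_mem _ hp, mem_subtype.mpr hap⟩)

lemma parts_erasePoint (P : Finpartition (univ : Finset V)) :
    (P.erasePoint v).parts = (P.parts.image (·.subtype (· ≠ v))).erase ∅ := rfl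

def insertPoint (P : Finpartition (univ : Finset {x // x ≠ v})) (q : Finset {x // x ≠ v})
    (hq : q = ∅ ∨ q ∈ P.parts) : Finpartition (univ : Finset V) where
  parts := insert (insert v (q.map (Embedding.subtype _)))
    ((P.parts.erase q).image (Finset.map (Embedding.subtype _)))
  supIndep := by
    have hdisj : ∀ r ∈ P.parts.erase q,
        Disjoint (insert v (q.map (Embedding.subtype _))) (r.map (Embedding.subtype _)) := by
      intro r hr
      obtain ⟨hrq, hr⟩ := mem_erase.mp hr
      refine disjoint_insert_left.mpr ⟨notMem_map_subtype_of_not_property r (not_not.mpr rfl),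
        disjoint_map _ |>.mpr ?_⟩
      rcases hq with rfl | hq
      · exact disjoint_empty_left r
      · exact P.disjoint hq hr fun h ↦ hrq h.symm
    rw [supIndep_iff_pairwiseDisjoint]
    rintro a ha b hb hab
    simp only [coe_insert, Set.mem_insert_iff, coe_image, Set.mem_image, mem_coe] at ha hb
    rcases ha with rfl | ⟨r, hr, rfl⟩ <;> rcases hb with rfl | ⟨r', hr', rfl⟩
    · exact absurd rfl hab
    · exact hdisj r' hr'
    · exact (hdisj r hr).symm
    · exact disjoint_map _ |>.mpr <|
        P.disjoint (mem_of_mem_erase hr) (mem_of_mem_erase hr') fun h ↦ hab (h ▸ rfl)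
  sup_parts := by
    refine eq_univ_of_forall fun x ↦ mem_sup.mpr ?_
    by_cases hxv : x = v
    · exact ⟨_, mem_insert_self _ _, by simp [hxv]⟩
    obtain ⟨p, hp, hxp⟩ := P.exists_mem (mem_univ (⟨x, hxv⟩ : {x // x ≠ v}))
    by_cases hpq : p = q
    · subst hpq
      exact ⟨_, mem_insert_self _ _, mem_insert_of_mem (mem_map_of_mem _ hxp)⟩
    · exact ⟨_, mem_insert_of_mem (mem_image_of_mem _ (mem_erase.mpr ⟨hpq, hp⟩)),
        mem_map_of_mem _ hxp⟩
  bot_notMem := by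
    simp only [bot_eq_empty, mem_insert, mem_image, not_or, not_exists, not_and]
    refine ⟨fun h ↦ insert_ne_empty _ _ h.symm, fun r hr hr₀ ↦ ?_⟩
    exact P.ne_empty (mem_of_mem_erase hr) (map_eq_empty.mp hr₀)

lemma parts_insertPoint (P : Finpartition (univ : Finset {x // x ≠ v}))
    (q : Finset {x // x ≠ v}) (hq : q = ∅ ∨ q ∈ P.parts) :
    (P.insertPoint q hq).parts =
      insert (insert v (q.map (Embedding.subtype _)))
        ((P.parts.erase q).image (Finset.map (Embedding.subtype _))) := rfl

lemma card_parts_insertPoint (P : Finpartition (univ : Finset {x // x ≠ v}))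
    (q : Finset {x // x ≠ v}) (hq : q = ∅ ∨ q ∈ P.parts) :
    #(P.insertPoint q hq).parts = #(P.parts.erase q) + 1 := by
  rw [parts_insertPoint, card_insert_of_notMem, card_image_of_injective _ (map_injective _)]
  simp only [mem_image, not_exists, not_and]
  exact fun r _ hr ↦
    notMem_map_subtype_of_not_property r (not_not.mpr rfl) (hr ▸ mem_insert_self _ _)

lemma part_insertPoint (P : Finpartition (univ : Finset {x // x ≠ v}))
    (q : Finset {x // x ≠ v}) (hq : q = ∅ ∨ q ∈ P.parts) :
    (P.insertPoint q hq).part v = insert v (q.map (Embedding.subtype _)) :=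
  part_eq_of_mem _ (mem_insert_self _ _) (mem_insert_self _ _)

lemma erasePoint_insertPoint (P : Finpartition (univ : Finset {x // x ≠ v}))
    (q : Finset {x // x ≠ v}) (hq : q = ∅ ∨ q ∈ P.parts) :
    (P.insertPoint q hq).erasePoint v = P := by
  ext : 1
  rw [parts_erasePoint, parts_insertPoint, image_insert,
    subtype_insert_of_neg (p := (· ≠ v)) (not_not.mpr rfl), subtype_map_subtype, image_image]
  simp only [comp_def, subtype_map_subtype, image_id']
  rcases hq with rfl | hq
  · rw [erase_eq_of_notMem P.empty_notMem_parts, erase_insert P.empty_notMem_parts]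
  · rw [insert_erase hq, erase_eq_of_notMem P.empty_notMem_parts]

lemma subtype_part_eq_empty_or_mem_erasePoint (P : Finpartition (univ : Finset V)) (v : V) :
    (P.part v).subtype (· ≠ v) = ∅ ∨
      (P.part v).subtype (· ≠ v) ∈ (P.erasePoint v).parts := by
  rw [or_iff_not_imp_left]
  exact fun h ↦ mem_erase.mpr ⟨h, mem_image_of_mem _ (P.part_mem.mpr (mem_univ v))⟩

lemma erase_part_erasePoint (P : Finpartition (univ : Finset V)) :
    (P.erasePoint v).parts.erase ((P.part v).subtype (· ≠ v)) =
      (P.parts.erase (P.part v)).image (·.subtype (· ≠ v)) := by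
  ext s
  simp only [parts_erasePoint, mem_erase, mem_image]
  constructor
  · rintro ⟨hsv, -, r, hr, rfl⟩
    exact ⟨r, ⟨fun hrv ↦ hsv (hrv ▸ rfl), hr⟩, rfl⟩
  · rintro ⟨r, ⟨hrv, hr⟩, rfl⟩
    obtain ⟨x, hx⟩ := P.nonempty_of_mem_parts hr
    have hxv : x ≠ v := fun h ↦ hrv (P.part_eq_of_mem hr (h ▸ hx)).symm
    have hxr : (⟨x, hxv⟩ : {x // x ≠ v}) ∈ r.subtype (· ≠ v) := mem_subtype.mpr hx
    refine ⟨fun h ↦ hrv (P.eq_of_mem_parts hr (P.part_mem.mpr (mem_univ v)) hx ?_),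
      ne_empty_of_mem hxr, r, hr, rfl⟩
    exact mem_subtype.mp (h ▸ hxr)

lemma insertPoint_erasePoint (P : Finpartition (univ : Finset V))
    (hq : (P.part v).subtype (· ≠ v) = ∅ ∨
      (P.part v).subtype (· ≠ v) ∈ (P.erasePoint v).parts) :
    (P.erasePoint v).insertPoint ((P.part v).subtype (· ≠ v)) hq = P := by
  ext : 1
  rw [parts_insertPoint, subtype_map, filter_ne', insert_erase (P.mem_part (mem_univ v)),
    erase_part_erasePoint, image_image]
  have hlift : ∀ r ∈ P.parts.erase (P.part v),
      (r.subtype (· ≠ v)).map (Embedding.subtype _) = r := by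
    intro r hr
    obtain ⟨hrv, hr⟩ := mem_erase.mp hr
    exact subtype_map_of_mem fun x hx hxv ↦ hrv (P.part_eq_of_mem hr (hxv ▸ hx)).symm
  rw [comp_def, image_congr hlift, image_id', insert_erase (P.part_mem.mpr (mem_univ v))]

end Finpartition

section VertexDeletion

open Finpartition Function

variable {V : Type*} [Fintype V] [DecidableEq V] (G : SimpleGraph V) {v : V}

def compatibleParts [DecidableRel G.Adj] (v : V) (P : Finpartition (univ : Finset {x // x ≠ v})) :
    Finset (Finset {x // x ≠ v}) :=
  {p ∈ P.parts | ∀ u ∈ p, ¬ G.Adj u v}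

def neighborParts [DecidableRel G.Adj] (v : V) (P : Finpartition (univ : Finset {x // x ≠ v})) :
    Finset (Finset {x // x ≠ v}) :=
  {p ∈ P.parts | ∃ u ∈ p, G.Adj u v}

lemma card_compatibleParts_add_card_neighborParts [DecidableRel G.Adj]
    (P : Finpartition (univ : Finset {x // x ≠ v})) :
    #(compatibleParts G v P) + #(neighborParts G v P) = #P.parts := by
  rw [compatibleParts, neighborParts,
    ← card_filter_add_card_filter_not (s := P.parts) fun p ↦ ∀ u ∈ p, ¬ G.Adj u v]
  simp only [not_forall, not_not, exists_prop]

lemma card_neighborParts_le_degree [DecidableRel G.Adj]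
    (P : Finpartition (univ : Finset {x // x ≠ v})) : #(neighborParts G v P) ≤ G.degree v := by
  rw [← G.card_neighborFinset_eq_degree]
  refine card_le_card_of_forall_subsingleton
    (r := fun (p : Finset {x // x ≠ v}) (w : V) ↦ ∃ u ∈ p, (u : V) = w) (fun p hp ↦ ?_)
    fun w _ p₁ hp₁ p₂ hp₂ ↦ ?_
  · obtain ⟨u, hu, huv⟩ := (mem_filter.mp hp).2
    exact ⟨u, G.mem_neighborFinset _ _ |>.mpr huv.symm, u, hu, rfl⟩
  · obtain ⟨hp₁, u₁, hu₁, rfl⟩ := hp₁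
    obtain ⟨hp₂, u₂, hu₂, hu⟩ := hp₂
    rw [← Subtype.ext hu] at hu₁
    exact P.eq_of_mem_parts (mem_filter.mp hp₁).1 (mem_filter.mp hp₂).1 hu₁ hu₂

variable {G}

lemma IsStablePartition.erasePoint {P : Finpartition (univ : Finset V)}
    (hP : IsStablePartition G P) : IsStablePartition (deleteVertex G v) (P.erasePoint v) := by
  intro p hp u hu w hw
  obtain ⟨r, hr, rfl⟩ := mem_image.mp (mem_of_mem_erase hp)
  exact hP r hr _ (mem_subtype.mp hu) _ (mem_subtype.mp hw)

lemma IsStablePartition.insertPoint {P : Finpartition (univ : Finset {x // x ≠ v})}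
    (hP : IsStablePartition (deleteVertex G v) P) {q : Finset {x // x ≠ v}}
    (hq : q = ∅ ∨ q ∈ P.parts) (hqv : ∀ u ∈ q, ¬ G.Adj u v) :
    IsStablePartition G (P.insertPoint q hq) := by
  have hlift : ∀ r, (r = ∅ ∨ r ∈ P.parts) →
      ∀ a ∈ r.map (Embedding.subtype _), ∀ b ∈ r.map (Embedding.subtype _),
        ¬ G.Adj a b := by
    rintro r hr _ ha' _ hb'
    obtain ⟨a, ha, rfl⟩ := mem_map.mp ha'
    obtain ⟨b, hb, rfl⟩ := mem_map.mp hb'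
    rcases hr with rfl | hr
    · exact absurd ha (notMem_empty a)
    · exact hP r hr a ha b hb
  intro p hp a ha b hb
  rcases mem_insert.mp hp with rfl | hp
  · rcases mem_insert.mp ha with rfl | ha <;> rcases mem_insert.mp hb with rfl | hb
    · exact G.loopless.irrefl _
    · obtain ⟨b, hb', rfl⟩ := mem_map.mp hb
      exact fun h ↦ hqv b hb' h.symm
    · obtain ⟨a, ha', rfl⟩ := mem_map.mp ha
      exact hqv a ha'
    · exact hlift q hq a ha b hb
  · obtain ⟨r, hr, rfl⟩ := mem_image.mp hp
    exact hlift r (Or.inr (mem_of_mem_erase hr)) a ha b hb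

lemma IsStablePartition.subtype_part_mem_insert_compatibleParts [DecidableRel G.Adj]
    {P : Finpartition (univ : Finset V)} (hP : IsStablePartition G P) :
    (P.part v).subtype (· ≠ v) ∈ insert ∅ (compatibleParts G v (P.erasePoint v)) := by
  rcases subtype_part_eq_empty_or_mem_erasePoint P v with h | h
  · exact h ▸ mem_insert_self _ _
  · refine mem_insert_of_mem (mem_filter.mpr ⟨h, fun u hu ↦ ?_⟩)
    exact hP _ (P.part_mem.mpr (mem_univ v)) _ (mem_subtype.mp hu) v (P.mem_part (mem_univ v))

lemma IsStablePartition.chromaticNumber_induce_neighborSet_le [DecidableRel G.Adj]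
    {P : Finpartition (univ : Finset {x // x ≠ v})}
    (hP : IsStablePartition (deleteVertex G v) P) :
    (G.induce (G.neighborSet v)).chromaticNumber ≤ #(neighborParts G v P) := by
  have hne : ∀ w : G.neighborSet v, (w : V) ≠ v := fun w h ↦ G.ne_of_adj w.2 h.symm
  let c : (G.induce (G.neighborSet v)).Coloring (neighborParts G v P) := .mk
    (fun w ↦ ⟨P.part ⟨w, hne w⟩, mem_filter.mpr ⟨P.part_mem.mpr (mem_univ _),
      ⟨w, hne w⟩, P.mem_part (mem_univ _), (w.2 : G.Adj v w).symm⟩⟩)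
    fun {w₁ w₂} hadj heq ↦ by
      have h₂ : (⟨w₂, hne w₂⟩ : {x // x ≠ v}) ∈ P.part ⟨w₁, hne w₁⟩ := by
        rw [Subtype.mk.inj heq]
        exact P.mem_part (mem_univ _)
      exact hP _ (P.part_mem.mpr (mem_univ _)) _ (P.mem_part (mem_univ _)) _ h₂ hadj
  simpa using c.colorable.chromaticNumber_le

lemma sum_stablePartitions_filter_erasePoint_eq [DecidableRel G.Adj] {M : Type*}
    [AddCommMonoid M] (f : ℕ → M) {P' : Finpartition (univ : Finset {x // x ≠ v})}
    (hP' : IsStablePartition (deleteVertex G v) P') :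
    ∑ P ∈ stablePartitions G with P.erasePoint v = P', f #P.parts =
      f (#P'.parts + 1) + #(compatibleParts G v P') • f #P'.parts := by
  have hq : ∀ q ∈ insert ∅ (compatibleParts G v P'), q = ∅ ∨ q ∈ P'.parts :=
    fun q hq ↦ (mem_insert.mp hq).imp_right fun hq ↦ (mem_filter.mp hq).1
  have hcompat : ∀ q ∈ insert ∅ (compatibleParts G v P'), ∀ u ∈ q, ¬ G.Adj u v := by
    intro q hq
    rcases mem_insert.mp hq with rfl | hq
    · simp
    · exact (mem_filter.mp hq).2
  calc ∑ P ∈ stablePartitions G with P.erasePoint v = P', f #P.parts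
      = ∑ q ∈ insert ∅ (compatibleParts G v P'), f (#(P'.parts.erase q) + 1) := by
        refine sum_bij' (fun P _ ↦ (P.part v).subtype (· ≠ v))
          (fun q hq' ↦ P'.insertPoint q (hq q hq')) (fun P hP ↦ ?_) (fun q hq' ↦ ?_)
          (fun P hP ↦ ?_) (fun q hq' ↦ ?_) (fun P hP ↦ ?_)
        · obtain ⟨hPG, rfl⟩ := mem_filter.mp hP
          exact (mem_stablePartitions.mp hPG).subtype_part_mem_insert_compatibleParts
        · exact mem_filter.mpr ⟨mem_stablePartitions.mpr (hP'.insertPoint _ (hcompat q hq')),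
            erasePoint_insertPoint _ _ _⟩
        · obtain ⟨-, rfl⟩ := mem_filter.mp hP
          exact insertPoint_erasePoint P _
        · rw [part_insertPoint, subtype_insert_of_neg (p := (· ≠ v)) (not_not.mpr rfl),
            subtype_map_subtype]
        · obtain ⟨-, rfl⟩ := mem_filter.mp hP
          have h := card_parts_insertPoint _ _ (subtype_part_eq_empty_or_mem_erasePoint P v)
          rw [insertPoint_erasePoint] at h
          rw [h]
    _ = f (#P'.parts + 1) + #(compatibleParts G v P') • f #P'.parts := by
        have hcompat_sub : compatibleParts G v P' ⊆ P'.parts := filter_subset _ _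
        rw [sum_insert fun h ↦ P'.empty_notMem_parts (hcompat_sub h),
          erase_eq_of_notMem P'.empty_notMem_parts,
          sum_congr rfl fun q hq ↦ by rw [card_erase_add_one (hcompat_sub hq)], sum_const]

variable (G)

lemma sum_stablePartitions_eq_sum_deleteVertex [DecidableRel G.Adj] {M : Type*} [AddCommMonoid M]
    (f : ℕ → M) (v : V) :
    ∑ P ∈ stablePartitions G, f #P.parts = ∑ P' ∈ stablePartitions (deleteVertex G v),
      (f (#P'.parts + 1) + #(compatibleParts G v P') • f #P'.parts) := by
  rw [← sum_fiberwise_of_maps_to (g := erasePoint v) fun P hP ↦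
    mem_stablePartitions.mpr (mem_stablePartitions.mp hP).erasePoint]
  exact sum_congr rfl fun P' hP' ↦
    sum_stablePartitions_filter_erasePoint_eq f (mem_stablePartitions.mp hP')

lemma colB_eq_sum_deleteVertex [DecidableRel G.Adj] (v : V) :
    colB G = ∑ P' ∈ stablePartitions (deleteVertex G v), (1 + #(compatibleParts G v P')) := by
  rw [colB_eq_card, card_eq_sum_ones]
  simpa only [smul_eq_mul, mul_one] using
    sum_stablePartitions_eq_sum_deleteVertex G (fun _ ↦ (1 : ℕ)) v

lemma colT_eq_sum_deleteVertex [DecidableRel G.Adj] (v : V) :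
    colT G = ∑ P' ∈ stablePartitions (deleteVertex G v),
      (#P'.parts + 1 + #(compatibleParts G v P') * #P'.parts) := by
  rw [colT_eq_sum]
  simpa only [smul_eq_mul] using sum_stablePartitions_eq_sum_deleteVertex G (fun n ↦ n) v

end VertexDeletion

theorem stmt4 {V : Type*} [Fintype V] [DecidableEq V] (G : SimpleGraph V) [DecidableRel G.Adj]
    (v : V)
    (hχ : ((G.degree v : ℕ∞)) ≤ (G.induce (G.neighborSet v)).chromaticNumber + 3) :
    colA G > colA (deleteVertex G v) := by
  have hbounds : ∀ P ∈ stablePartitions (deleteVertex G v),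
      G.degree v ≤ #(neighborParts G v P) + 3 ∧ #(neighborParts G v P) ≤ G.degree v := by
    intro P hP
    have hχP := (mem_stablePartitions.mp hP).chromaticNumber_induce_neighborSet_le
    have hdeg : (G.degree v : ℕ∞) ≤ #(neighborParts G v P) + 3 := hχ.trans (by gcongr)
    exact ⟨by exact_mod_cast hdeg, card_neighborParts_le_degree G P⟩
  rw [gt_iff_lt, colA, colA, colT_eq_sum_deleteVertex G v, colB_eq_sum_deleteVertex G v,
    colT_eq_sum, colB_eq_card]
  refine sum_div_card_lt_sum_div_sum (stablePartitions_nonempty _) _ _ fun P hP Q hQ ↦ ?_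
  have hPcard := card_compatibleParts_add_card_neighborParts G P
  have hQcard := card_compatibleParts_add_card_neighborParts G Q
  obtain ⟨hP₁, hP₂⟩ := hbounds P hP
  obtain ⟨hQ₁, hQ₂⟩ := hbounds Q hQ
  rw [abs_le]
  omega
end

section
/- The sequence of Bell numbers is strictly log-convex: B_n² < B_{n−1}·B_{n+1} for all n ≥ 2. -/
open Finset

/-- The `n`th Bell number: the number of partitions of an `n`-element set. -/
noncomputable def bell (n : ℕ) : ℕ :=
  Nat.card (Finpartition (Finset.univ : Finset (Fin n)))

/-!
Deleting a point `a` from a partition of `insert a s` leaves a partition `P` of `s`, and `a` is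
recovered from `P` by choosing either a new singleton block or one of the blocks of `P`. Weighting
partitions by a function `w` of their number of blocks, the sum over partitions of `insert a s`
is therefore the sum over partitions of `s` of `w (k + 1) + k • w k`, where `k` is the number of
blocks. Iterating from `w = 1` gives `B (m + 1) = ∑ (k + 1)` and `B (m + 2) = ∑ ((k + 1) ^ 2 + 1)`,
both sums over the `B m` partitions of an `m`-set, and Cauchy–Schwarz gives
`B (m + 1) ^ 2 ≤ B m * ∑ (k + 1) ^ 2 < B m * B (m + 2)`.
-/

def bellShift {M : Type*} [AddCommMonoid M] (w : ℕ → M) (k : ℕ) : M := w (k + 1) + k • w k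

namespace Finpartition

variable {α : Type*} [DecidableEq α] {s : Finset α} {a : α}

section InsertIntoPart

variable (P : Finpartition s) (ha : a ∉ s) {t : Finset α} (ht : t ∈ insert ∅ P.parts)
include ht

lemma subset_of_mem_insert_empty : t ⊆ s := by
  obtain rfl | ht := mem_insert.1 ht
  exacts [empty_subset s, P.subset ht]

lemma sup_parts_erase : (P.parts.erase t).sup id = s \ t := by
  obtain rfl | ht := mem_insert.1 ht
  · rw [erase_eq_of_notMem P.empty_notMem_parts, sdiff_empty, P.sup_parts]
  have hdisj : Disjoint ((P.parts.erase t).sup id) t :=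
    (P.supIndep (erase_subset t P.parts) ht (notMem_erase t P.parts)).symm
  have hunion : (P.parts.erase t).sup id ⊔ t = s :=
    calc (P.parts.erase t).sup id ⊔ t = (insert t (P.parts.erase t)).sup id := by
          rw [sup_insert, id, sup_comm]
      _ = s := by rw [insert_erase ht, P.sup_parts]
  calc (P.parts.erase t).sup id = ((P.parts.erase t).sup id ⊔ t) \ t := by
        rw [sup_sdiff_right_self, hdisj.sdiff_eq_left]
    _ = s \ t := congrArg (· \ t) hunion

/-- For `t = ∅` the point `a` becomes the new block `{a}`. -/
def insertIntoPart : Finpartition (insert a s) :=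
  (P.ofSubset (erase_subset t P.parts) (P.sup_parts_erase ht)).extend (insert_ne_empty a t)
    (disjoint_insert_right.2 ⟨fun h => ha (mem_sdiff.1 h).1, sdiff_disjoint⟩)
    (by rw [sup_eq_union, union_insert, sdiff_union_of_subset (P.subset_of_mem_insert_empty ht)])

lemma insertIntoPart_parts :
    (P.insertIntoPart ha ht).parts = insert (insert a t) (P.parts.erase t) := rfl

lemma card_insertIntoPart : #(P.insertIntoPart ha ht).parts = #(P.parts.erase t) + 1 :=
  card_extend _ _ _

lemma erase_part_insertIntoPart : ((P.insertIntoPart ha ht).part a).erase a = t := by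
  rw [part_eq_of_mem _ (mem_insert_self _ _) (mem_insert_self a t),
    erase_insert fun h => ha (P.subset_of_mem_insert_empty ht h)]

end InsertIntoPart

def eraseOfInsert (Q : Finpartition (insert a s)) (ha : a ∉ s) : Finpartition s :=
  (Q.avoid {a}).copy (by rw [sdiff_singleton_eq_erase, erase_insert ha])

lemma eraseOfInsert_parts (Q : Finpartition (insert a s)) (ha : a ∉ s) :
    (Q.eraseOfInsert ha).parts = (Q.parts.image (·.erase a)).erase ∅ := by
  show (Q.parts.image (· \ {a})).erase ⊥ = _
  simp only [sdiff_singleton_eq_erase, bot_eq_empty]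

lemma image_erase_parts_of_notMem (P : Finpartition s) (ha : a ∉ s) {R : Finset (Finset α)}
    (hR : R ⊆ P.parts) : R.image (·.erase a) = R :=
  (image_congr fun _ hd => erase_eq_of_notMem fun had => ha (P.subset (hR hd) had)).trans image_id

lemma image_erase_parts (Q : Finpartition s) (ha : a ∈ s) :
    Q.parts.image (·.erase a) = insert ((Q.part a).erase a) (Q.parts.erase (Q.part a)) := by
  conv_lhs => rw [← insert_erase (Q.part_mem.2 ha)]
  rw [image_insert]
  refine congrArg _ ((image_congr fun d hd => erase_eq_of_notMem fun had => ?_).trans image_id)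
  obtain ⟨hne, hd⟩ := mem_erase.1 hd
  exact hne (Q.part_eq_of_mem hd had).symm

lemma erase_part_notMem_erase_parts (Q : Finpartition s) (a : α) :
    (Q.part a).erase a ∉ Q.parts.erase (Q.part a) := by
  intro h
  obtain ⟨hne, hd⟩ := mem_erase.1 h
  have ha : a ∈ s := by
    by_contra ha
    rw [Q.part_eq_empty.2 ha, erase_empty] at hd
    exact Q.empty_notMem_parts hd
  have hdisj := (Q.disjoint hd (Q.part_mem.2 ha) hne).mono_right (erase_subset a (Q.part a))
  exact Q.ne_empty hd (disjoint_self_iff_empty _ |>.1 hdisj)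

lemma erase_part_mem_insert_empty (Q : Finpartition (insert a s)) (ha : a ∉ s) :
    (Q.part a).erase a ∈ insert ∅ (Q.eraseOfInsert ha).parts := by
  by_cases h : (Q.part a).erase a = ∅
  · exact h ▸ mem_insert_self _ _
  · refine mem_insert_of_mem ?_
    rw [eraseOfInsert_parts]
    exact mem_erase.2 ⟨h, mem_image_of_mem _ (Q.part_mem.2 (mem_insert_self a s))⟩

lemma eraseOfInsert_insertIntoPart (P : Finpartition s) (ha : a ∉ s) {t : Finset α}
    (ht : t ∈ insert ∅ P.parts) : (P.insertIntoPart ha ht).eraseOfInsert ha = P := by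
  ext1
  rw [eraseOfInsert_parts, insertIntoPart_parts, image_insert,
    erase_insert fun h => ha (P.subset_of_mem_insert_empty ht h),
    P.image_erase_parts_of_notMem ha (erase_subset t P.parts)]
  obtain rfl | ht := mem_insert.1 ht
  · rw [erase_insert (notMem_erase _ _), erase_eq_of_notMem P.empty_notMem_parts]
  · rw [insert_erase ht, erase_eq_of_notMem P.empty_notMem_parts]

lemma insertIntoPart_eraseOfInsert (Q : Finpartition (insert a s)) (ha : a ∉ s) :
    (Q.eraseOfInsert ha).insertIntoPart ha (Q.erase_part_mem_insert_empty ha) = Q := by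
  ext1
  rw [insertIntoPart_parts, eraseOfInsert_parts,
    insert_erase (Q.mem_part_self.2 (mem_insert_self a s)),
    Q.image_erase_parts (mem_insert_self a s), erase_right_comm,
    erase_insert (Q.erase_part_notMem_erase_parts a),
    erase_eq_of_notMem fun h => Q.empty_notMem_parts (mem_of_mem_erase h),
    insert_erase (Q.part_mem.2 (mem_insert_self a s))]

theorem sum_card_parts_insert {M : Type*} [AddCommMonoid M] (ha : a ∉ s) (w : ℕ → M) :
    ∑ Q : Finpartition (insert a s), w #Q.parts =
      ∑ P : Finpartition s, bellShift w #P.parts := by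
  have hfibre (P : Finpartition s) :
      ∑ t ∈ insert ∅ P.parts, w (#(P.parts.erase t) + 1) = bellShift w #P.parts := by
    rw [sum_insert P.empty_notMem_parts, erase_eq_of_notMem P.empty_notMem_parts,
      sum_congr rfl fun t ht => by rw [card_erase_add_one ht], sum_const, bellShift]
  rw [← sum_congr rfl fun P _ => hfibre P, sum_sigma']
  symm
  refine sum_bij' (fun x hx => x.1.insertIntoPart ha (mem_sigma.1 hx).2)
    (fun Q _ => ⟨Q.eraseOfInsert ha, (Q.part a).erase a⟩) (fun _ _ => mem_univ _)
    (fun Q _ => mem_sigma.2 ⟨mem_univ _, Q.erase_part_mem_insert_empty ha⟩)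
    (fun x _ => ?_) (fun Q _ => Q.insertIntoPart_eraseOfInsert ha)
    (fun x _ => by rw [card_insertIntoPart])
  exact Sigma.ext (eraseOfInsert_insertIntoPart _ _ _)
    (heq_of_eq (erase_part_insertIntoPart _ _ _))

theorem sum_card_parts_eq_iterate_bellShift {M : Type*} [AddCommMonoid M] (s : Finset α)
    (w : ℕ → M) : ∑ Q : Finpartition s, w #Q.parts = (bellShift^[#s] w) 0 := by
  induction s using Finset.induction_on generalizing w with
  | empty =>
    exact (Fintype.sum_subsingleton (ι := Finpartition (⊥ : Finset α)) _ ⊥).trans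
      (by rw [card_bot]; rfl)
  | insert a s ha ih =>
    rw [sum_card_parts_insert ha, card_insert_of_notMem ha, Function.iterate_succ_apply, ih]

end Finpartition

lemma sum_card_parts_fin_succ {M : Type*} [AddCommMonoid M] (n : ℕ) (w : ℕ → M) :
    ∑ Q : Finpartition (univ : Finset (Fin (n + 1))), w #Q.parts =
      ∑ P : Finpartition (univ : Finset (Fin n)), bellShift w #P.parts := by
  simp only [Finpartition.sum_card_parts_eq_iterate_bellShift, card_univ, Fintype.card_fin,
    Function.iterate_succ_apply]

lemma bell_eq_card (n : ℕ) : bell n = Fintype.card (Finpartition (univ : Finset (Fin n))) :=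
  Nat.card_eq_fintype_card

lemma bell_succ_eq_sum (n : ℕ) :
    bell (n + 1) = ∑ P : Finpartition (univ : Finset (Fin n)), (#P.parts + 1) := by
  rw [bell_eq_card, Fintype.card_eq_sum_ones, sum_card_parts_fin_succ n fun _ => 1]
  simp only [bellShift, smul_eq_mul, mul_one, add_comm]

lemma bell_add_two_eq_sum (n : ℕ) :
    bell (n + 2) = ∑ P : Finpartition (univ : Finset (Fin n)), ((#P.parts + 1) ^ 2 + 1) := by
  rw [bell_eq_card, Fintype.card_eq_sum_ones, sum_card_parts_fin_succ (n + 1) fun _ => 1,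
    sum_card_parts_fin_succ n]
  refine sum_congr rfl fun P _ => ?_
  simp only [bellShift, smul_eq_mul, mul_one]
  ring

theorem sq_sum_lt_card_mul_sum_sq_add_one {ι R : Type*} [Semiring R] [LinearOrder R]
    [IsStrictOrderedRing R] [ExistsAddOfLE R] {s : Finset ι} (hs : s.Nonempty) (f : ι → R) :
    (∑ i ∈ s, f i) ^ 2 < #s * ∑ i ∈ s, (f i ^ 2 + 1) := by
  have hcard : (0 : R) < #s := Nat.cast_pos.2 hs.card_pos
  calc (∑ i ∈ s, f i) ^ 2 ≤ #s * ∑ i ∈ s, f i ^ 2 := sq_sum_le_card_mul_sum_sq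
    _ < #s * ∑ i ∈ s, f i ^ 2 + #s * #s := lt_add_of_pos_right _ (mul_pos hcard hcard)
    _ = #s * ∑ i ∈ s, (f i ^ 2 + 1) := by rw [sum_add_distrib, sum_const, nsmul_one, mul_add]

theorem stmt14 (n : ℕ) (hn : 2 ≤ n) :
    bell n ^ 2 < bell (n - 1) * bell (n + 1) := by
  obtain ⟨m, rfl⟩ : ∃ m, n = m + 1 := ⟨n - 1, by omega⟩
  rw [Nat.add_sub_cancel, bell_succ_eq_sum, bell_add_two_eq_sum, bell_eq_card, ← card_univ]
  exact sq_sum_lt_card_mul_sum_sq_add_one univ_nonempty _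
end

section
/- For odd n ≥ 3, every p ≥ 0 and every 1 ≤ k ≤ n+p: S(C_n ∪ pK_1, k) = Σ_{i=0}^{(n−3)/2} S(Q_{2i+3} ∪ pK_1, k), where Q_m is the graph obtained from the path P_m by adding an edge between one endpoint v and the vertex at distance 2 from v on the path. -/
open Finset

/-- `Qgraph m` : the path on `m` vertices plus the edge between vertex 0 and vertex 2. -/
def Qgraph (m : ℕ) : SimpleGraph (Fin m) :=
  SimpleGraph.fromRel (fun a b => (SimpleGraph.pathGraph m).Adj a b ∨ (a.val = 0 ∧ b.val = 2))


/-!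
Deletion–contraction: for distinct non-adjacent `u, v`, a stable partition of `G` either separates
`u` and `v`, and is then a stable partition of `G + uv`, or puts them in one part, and is then
the preimage of a unique stable partition of the contraction `G / uv`. Hence
`S(G, k) = S(G + uv, k) + S(G / uv, k)`, also after adding a disjoint summand such as `pK₁`.

On the path `P_m` (`m ≥ 3`), closing the cycle and adding the chord `v₁v₃` give
`S(P_m) = S(C_m) + S(C_{m-1})` and `S(P_m) = S(Q_m) + S(P_{m-1})`, since contracting `v₁v_m`
yields `C_{m-1}` and contracting `v₁v₃` yields `P_{m-1}`. Eliminating the paths,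
`S(C_m) = S(Q_m) + S(C_{m-2})`, and the sum follows by induction from `C_3 = Q_3`.
-/

open SimpleGraph

section Deletion

variable {V : Type*} [Fintype V] [DecidableEq V]

theorem isStablePartition_sup_edge_iff {G : SimpleGraph V} {u v : V} (huv : u ≠ v)
    (P : Finpartition (univ : Finset V)) :
    IsStablePartition (G ⊔ edge u v) P ↔
      IsStablePartition G P ∧ ¬∃ p ∈ P.parts, u ∈ p ∧ v ∈ p := by
  simp only [IsStablePartition, sup_adj, edge_adj, not_exists, not_and]
  refine ⟨fun h => ⟨fun p hp x hx y hy hxy => h p hp x hx y hy (.inl hxy),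
    fun p hp hu hv => h p hp u hu v hv (.inr ⟨.inl ⟨rfl, rfl⟩, huv⟩)⟩, ?_⟩
  rintro ⟨hG, hsep⟩ p hp x hx y hy (hxy | ⟨⟨rfl, rfl⟩ | ⟨rfl, rfl⟩, -⟩)
  exacts [hG p hp x hx y hy hxy, hsep p hp hx hy, hsep p hp hy hx]

theorem colS_eq_colS_sup_edge_add (G : SimpleGraph V) {u v : V} (huv : u ≠ v) (k : ℕ) :
    colS G k = colS (G ⊔ edge u v) k +
      {P : Finpartition (univ : Finset V) |
        IsStablePartition G P ∧ #P.parts = k ∧ ∃ p ∈ P.parts, u ∈ p ∧ v ∈ p}.ncard := by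
  set S := {P : Finpartition (univ : Finset V) | IsStablePartition G P ∧ #P.parts = k}
  set T := {P : Finpartition (univ : Finset V) | ∃ p ∈ P.parts, u ∈ p ∧ v ∈ p}
  have hdiff : S \ T =
      {P : Finpartition (univ : Finset V) | IsStablePartition (G ⊔ edge u v) P ∧ #P.parts = k} := by
    ext P
    simp only [S, T, Set.mem_sdiff, Set.mem_ofPred_eq, isStablePartition_sup_edge_iff huv]
    tauto
  have hinter : S ∩ T = {P : Finpartition (univ : Finset V) |
      IsStablePartition G P ∧ #P.parts = k ∧ ∃ p ∈ P.parts, u ∈ p ∧ v ∈ p} := by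
    ext P
    simp only [S, T, Set.mem_inter_iff, Set.mem_ofPred_eq, and_assoc]
  rw [colS, colS, ← hdiff, ← hinter, add_comm, Set.ncard_inter_add_ncard_sdiff_eq_ncard]

end Deletion

theorem Function.Surjective.filter_mem_injective {V W : Type*} [Fintype V] [DecidableEq W]
    {σ : V → W} (hσ : Function.Surjective σ) :
    Function.Injective fun q : Finset W => ({x | σ x ∈ q} : Finset V) := by
  intro q q' h
  ext w
  obtain ⟨x, rfl⟩ := hσ w
  simpa using congrArg (x ∈ ·) h

namespace Finpartition

variable {V W X : Type*} [Fintype V] [DecidableEq V] [Fintype W] [DecidableEq W]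
  [Fintype X] [DecidableEq X]

def comap (f : V → W) (Q : Finpartition (univ : Finset W)) : Finpartition (univ : Finset V) :=
  ofErase (Q.parts.image fun q => ({x | f x ∈ q} : Finset V))
    (by
      rw [supIndep_iff_pairwiseDisjoint]
      intro t ht t' ht' hne
      simp only [coe_image, Set.mem_image, mem_coe] at ht ht'
      obtain ⟨q, hq, rfl⟩ := ht
      obtain ⟨q', hq', rfl⟩ := ht'
      refine Finset.disjoint_left.2 fun x hx hx' => hne ?_
      simp only [id, mem_filter, mem_univ, true_and] at hx hx'
      rw [Q.eq_of_mem_parts hq hq' hx hx'])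
    (eq_univ_of_forall fun x => by
      obtain ⟨q, hq, hxq⟩ := Q.exists_mem (mem_univ (f x))
      exact mem_sup.2 ⟨_, mem_image_of_mem _ hq, by simpa using hxq⟩)

theorem mem_comap_parts {f : V → W} {Q : Finpartition (univ : Finset W)} {t : Finset V} :
    t ∈ (Q.comap f).parts ↔ t.Nonempty ∧ ∃ q ∈ Q.parts, ({x | f x ∈ q} : Finset V) = t := by
  simp [comap, ofErase, nonempty_iff_ne_empty]

theorem comap_parts_of_surjective {σ : V → W} (hσ : Function.Surjective σ)
    (Q : Finpartition (univ : Finset W)) :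
    (Q.comap σ).parts = Q.parts.image fun q => ({x | σ x ∈ q} : Finset V) := by
  ext t
  rw [mem_comap_parts, mem_image]
  refine ⟨fun h => h.2, ?_⟩
  rintro ⟨q, hq, rfl⟩
  obtain ⟨w, hw⟩ := Q.nonempty_of_mem_parts hq
  obtain ⟨x, rfl⟩ := hσ w
  exact ⟨⟨x, by simpa using hw⟩, q, hq, rfl⟩

theorem card_comap_parts {σ : V → W} (hσ : Function.Surjective σ)
    (Q : Finpartition (univ : Finset W)) : #(Q.comap σ).parts = #Q.parts := by
  rw [comap_parts_of_surjective hσ,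
    card_image_of_injective _ hσ.filter_mem_injective]

theorem comap_injective {σ : V → W} (hσ : Function.Surjective σ) :
    Function.Injective (comap σ) := fun Q Q' h =>
  Finpartition.ext <| image_injective hσ.filter_mem_injective <| by
    rw [← comap_parts_of_surjective hσ, ← comap_parts_of_surjective hσ, h]

theorem comap_comap (f : V → W) (g : X → V) (Q : Finpartition (univ : Finset W)) :
    (Q.comap f).comap g = Q.comap (f ∘ g) := by
  ext t
  simp only [mem_comap_parts]
  constructor
  · rintro ⟨ht, _, ⟨-, q, hq, rfl⟩, rfl⟩
    exact ⟨ht, q, hq, by simp⟩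
  · rintro ⟨⟨x, hx⟩, q, hq, rfl⟩
    simp only [Function.comp_apply, mem_filter, mem_univ, true_and] at hx
    exact ⟨⟨x, by simpa using hx⟩, _, ⟨⟨g x, by simpa using hx⟩, q, hq, rfl⟩, by simp⟩

theorem comap_eq_self {f : V → V} (P : Finpartition (univ : Finset V))
    (hf : ∀ p ∈ P.parts, ∀ x, f x ∈ p ↔ x ∈ p) : P.comap f = P := by
  ext t
  rw [mem_comap_parts]
  constructor
  · rintro ⟨-, p, hp, rfl⟩
    convert hp using 1
    ext x
    simpa using hf p hp x
  · intro ht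
    refine ⟨P.nonempty_of_mem_parts ht, t, ht, ?_⟩
    ext x
    simpa using hf t ht x

end Finpartition

section Contraction

open Finpartition

variable {V W : Type*} [Fintype V] [DecidableEq V] [Fintype W] [DecidableEq W]

theorem isStablePartition_comap_iff {G : SimpleGraph V} {σ : V → W}
    (hfib : ∀ x y, σ x = σ y → ¬G.Adj x y) (Q : Finpartition (univ : Finset W)) :
    IsStablePartition G (Q.comap σ) ↔ IsStablePartition (G.map σ) Q := by
  constructor
  · rintro hG q hq _ hx _ hy ⟨-, x, y, hxy, rfl, rfl⟩
    exact hG _ (mem_comap_parts.2 ⟨⟨x, by simpa using hx⟩, q, hq, rfl⟩) x (by simpa using hx) y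
      (by simpa using hy) hxy
  · intro hH t ht x hx y hy hxy
    obtain ⟨-, q, hq, rfl⟩ := mem_comap_parts.1 ht
    simp only [mem_filter, mem_univ, true_and] at hx hy
    exact hH q hq _ hx _ hy ⟨fun h => hfib x y h hxy, x, y, hxy, rfl, rfl⟩

theorem ncard_saturated_eq_colS_map (G : SimpleGraph V) {σ : V → W}
    (hσ : Function.Surjective σ) (hfib : ∀ x y, σ x = σ y → ¬G.Adj x y) (k : ℕ) :
    {P : Finpartition (univ : Finset V) | IsStablePartition G P ∧ #P.parts = k ∧
      ∀ p ∈ P.parts, ∀ x ∈ p, ∀ y, σ x = σ y → y ∈ p}.ncard = colS (G.map σ) k := by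
  suffices himage : {P : Finpartition (univ : Finset V) | IsStablePartition G P ∧
      #P.parts = k ∧ ∀ p ∈ P.parts, ∀ x ∈ p, ∀ y, σ x = σ y → y ∈ p} =
      comap σ '' {Q | IsStablePartition (G.map σ) Q ∧ #Q.parts = k} by
    rw [himage, Set.ncard_image_of_injective _ (comap_injective hσ), colS]
  ext P
  constructor
  · rintro ⟨hst, hk, hsat⟩
    have hP : (P.comap (Function.surjInv hσ)).comap σ = P := by
      rw [Finpartition.comap_comap]
      refine comap_eq_self P fun p hp x => ?_
      have hx : σ (Function.surjInv hσ (σ x)) = σ x := Function.surjInv_eq hσ (σ x)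
      exact ⟨fun h => hsat p hp _ h x hx, fun h => hsat p hp x h _ hx.symm⟩
    refine ⟨P.comap (Function.surjInv hσ), ⟨?_, ?_⟩, hP⟩
    · rwa [← isStablePartition_comap_iff hfib, hP]
    · rwa [← card_comap_parts hσ, hP]
  · rintro ⟨Q, ⟨hst, hk⟩, rfl⟩
    refine ⟨(isStablePartition_comap_iff hfib Q).2 hst, (card_comap_parts hσ Q).trans hk, ?_⟩
    intro p hp x hx y hxy
    obtain ⟨-, q, hq, rfl⟩ := mem_comap_parts.1 hp
    simpa [← hxy] using hx

theorem colS_eq_colS_sup_edge_add_colS_map (G : SimpleGraph V) {u v : V} (huv : u ≠ v)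
    (hadj : ¬G.Adj u v) {σ : V → W} (hσ : Function.Surjective σ)
    (hfib : ∀ x y, σ x = σ y ↔ x = y ∨ x = u ∧ y = v ∨ x = v ∧ y = u) (k : ℕ) :
    colS G k = colS (G ⊔ edge u v) k + colS (G.map σ) k := by
  have hind : ∀ x y, σ x = σ y → ¬G.Adj x y := by
    intro x y h
    rcases (hfib x y).1 h with rfl | ⟨rfl, rfl⟩ | ⟨rfl, rfl⟩
    exacts [G.loopless.irrefl x, hadj, fun h => hadj h.symm]
  have hsat : ∀ P : Finpartition (univ : Finset V),
      (∀ p ∈ P.parts, ∀ x ∈ p, ∀ y, σ x = σ y → y ∈ p) ↔ ∃ p ∈ P.parts, u ∈ p ∧ v ∈ p := by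
    intro P
    constructor
    · intro h
      obtain ⟨p, hp, hu⟩ := P.exists_mem (mem_univ u)
      exact ⟨p, hp, hu, h p hp u hu v ((hfib u v).2 (.inr (.inl ⟨rfl, rfl⟩)))⟩
    · rintro ⟨p₀, hp₀, hu, hv⟩ p hp x hx y hxy
      rcases (hfib x y).1 hxy with rfl | ⟨rfl, rfl⟩ | ⟨rfl, rfl⟩
      · exact hx
      · exact P.eq_of_mem_parts hp₀ hp hu hx ▸ hv
      · exact P.eq_of_mem_parts hp₀ hp hv hx ▸ hu
  rw [colS_eq_colS_sup_edge_add G huv, ← ncard_saturated_eq_colS_map G hσ hind k]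
  simp only [hsat]

end Contraction

section Union

variable {V W U : Type*}

@[simp] theorem graphUnion_adj_inl_inl (G : SimpleGraph V) (K : SimpleGraph U) (x y : V) :
    (graphUnion G K).Adj (Sum.inl x) (Sum.inl y) ↔ G.Adj x y := Iff.rfl

@[simp] theorem graphUnion_adj_inr_inr (G : SimpleGraph V) (K : SimpleGraph U) (x y : U) :
    (graphUnion G K).Adj (Sum.inr x) (Sum.inr y) ↔ K.Adj x y := Iff.rfl

@[simp] theorem graphUnion_not_adj_inl_inr (G : SimpleGraph V) (K : SimpleGraph U) (x : V)
    (y : U) : ¬(graphUnion G K).Adj (Sum.inl x) (Sum.inr y) := id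

@[simp] theorem graphUnion_not_adj_inr_inl (G : SimpleGraph V) (K : SimpleGraph U) (x : U)
    (y : V) : ¬(graphUnion G K).Adj (Sum.inr x) (Sum.inl y) := id

theorem graphUnion_sup_edge (G : SimpleGraph V) (K : SimpleGraph U) (u v : V) :
    graphUnion (G ⊔ edge u v) K = graphUnion G K ⊔ edge (Sum.inl u) (Sum.inl v) := by
  ext (x | x) (y | y) <;> simp [edge_adj]

theorem graphUnion_map (G : SimpleGraph V) (K : SimpleGraph U) (σ : V → W) :
    graphUnion (G.map σ) K = (graphUnion G K).map (Sum.map σ id) := by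
  ext (x | x) (y | y) <;> simp [map_adj']
  exact K.ne_of_adj

variable [Fintype V] [DecidableEq V] [Fintype W] [DecidableEq W] [Fintype U] [DecidableEq U]

theorem colS_graphUnion_eq_colS_sup_edge_add_colS_map (G : SimpleGraph V) (K : SimpleGraph U)
    {u v : V} (huv : u ≠ v) (hadj : ¬G.Adj u v) {σ : V → W} (hσ : Function.Surjective σ)
    (hfib : ∀ x y, σ x = σ y ↔ x = y ∨ x = u ∧ y = v ∨ x = v ∧ y = u) (k : ℕ) :
    colS (graphUnion G K) k =
      colS (graphUnion (G ⊔ edge u v) K) k + colS (graphUnion (G.map σ) K) k := by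
  rw [graphUnion_sup_edge, graphUnion_map]
  refine colS_eq_colS_sup_edge_add_colS_map _ (Sum.inl_injective.ne huv) hadj
    (hσ.sumMap Function.surjective_id) ?_ k
  rintro (x | x) (y | y) <;> simp [hfib]

end Union

section Paths

variable (t : ℕ)

theorem cycleGraph_adj_iff_val {n : ℕ} {u v : Fin (n + 2)} :
    (cycleGraph (n + 2)).Adj u v ↔ u.val + 1 = v.val ∨ v.val + 1 = u.val ∨
      (u.val = 0 ∧ v.val = n + 1) ∨ (v.val = 0 ∧ u.val = n + 1) := by
  have key : ∀ a b : Fin (n + 2),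
      a - b = 1 ↔ b.val + 1 = a.val ∨ (a.val = 0 ∧ b.val = n + 1) := by
    intro a b
    rw [sub_eq_iff_eq_add']
    simp only [Fin.ext_iff, Fin.val_add_one, Fin.val_last]
    split_ifs <;> omega
  rw [cycleGraph_adj, key, key]
  omega

theorem Qgraph_adj_iff_val {m : ℕ} {a b : Fin m} :
    (Qgraph m).Adj a b ↔ a.val + 1 = b.val ∨ b.val + 1 = a.val ∨
      (a.val = 0 ∧ b.val = 2) ∨ (b.val = 0 ∧ a.val = 2) := by
  rw [Qgraph, fromRel_adj, pathGraph_adj, pathGraph_adj, ne_eq, Fin.ext_iff]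
  omega

theorem cycleGraph_eq_pathGraph_sup_edge :
    cycleGraph (t + 3) = pathGraph (t + 3) ⊔ edge 0 (Fin.last (t + 2)) := by
  ext a b
  simp only [cycleGraph_adj_iff_val, sup_adj, pathGraph_adj, edge_adj, ne_eq, Fin.ext_iff,
    Fin.val_zero, Fin.val_last]
  omega

theorem Qgraph_eq_pathGraph_sup_edge :
    Qgraph (t + 3) = pathGraph (t + 3) ⊔ edge 0 2 := by
  ext a b
  simp only [Qgraph_adj_iff_val, sup_adj, pathGraph_adj, edge_adj, ne_eq, Fin.ext_iff,
    Fin.val_zero, Fin.val_two]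
  omega

def contractZeroLast (i : Fin (t + 3)) : Fin (t + 2) :=
  if h : i.val = t + 2 then 0 else ⟨i.val, by omega⟩

/-- Contracting `0` and `2` in the path `0 – 1 – 2 – 3 – ⋯` leaves the path
`1 – {0, 2} – 3 – ⋯`, relabelled `0, 1, 2, …`. -/
def contractZeroTwo (i : Fin (t + 3)) : Fin (t + 2) :=
  ⟨if i.val = 1 then 0 else if i.val ≤ 2 then 1 else i.val - 1, by split_ifs <;> omega⟩

theorem val_contractZeroLast (i : Fin (t + 3)) :
    (contractZeroLast t i).val = if i.val = t + 2 then 0 else i.val := by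
  unfold contractZeroLast
  split_ifs <;> rfl

theorem val_contractZeroTwo (i : Fin (t + 3)) :
    (contractZeroTwo t i).val = if i.val = 1 then 0 else if i.val ≤ 2 then 1 else i.val - 1 :=
  rfl

theorem contractZeroLast_castSucc (i : Fin (t + 2)) : contractZeroLast t i.castSucc = i :=
  Fin.ext <| by simp [val_contractZeroLast, i.isLt.ne]

theorem contractZeroTwo_succ (i : Fin (t + 2)) : contractZeroTwo t i.succ = i :=
  Fin.ext <| by simp only [val_contractZeroTwo, Fin.val_succ]; split_ifs <;> omega

theorem contractZeroLast_eq_iff {x y : Fin (t + 3)} :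
    contractZeroLast t x = contractZeroLast t y ↔
      x = y ∨ x = 0 ∧ y = Fin.last (t + 2) ∨ x = Fin.last (t + 2) ∧ y = 0 := by
  simp only [Fin.ext_iff, val_contractZeroLast, Fin.val_zero, Fin.val_last]
  split_ifs <;> omega

theorem contractZeroTwo_eq_iff {x y : Fin (t + 3)} :
    contractZeroTwo t x = contractZeroTwo t y ↔ x = y ∨ x = 0 ∧ y = 2 ∨ x = 2 ∧ y = 0 := by
  simp only [Fin.ext_iff, val_contractZeroTwo, Fin.val_zero, Fin.val_two]
  grind

theorem pathGraph_map_contractZeroLast :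
    (pathGraph (t + 3)).map (contractZeroLast t) = cycleGraph (t + 2) := by
  ext a b
  rw [map_adj', cycleGraph_adj_iff_val]
  constructor
  · rintro ⟨-, x, y, hxy, rfl, rfl⟩
    rw [pathGraph_adj] at hxy
    simp only [val_contractZeroLast]
    split_ifs <;> omega
  · intro h
    refine ⟨fun hab => by subst hab; omega, ?_⟩
    have hlast : contractZeroLast t (Fin.last (t + 2)) = 0 := Fin.ext <| by
      simp [val_contractZeroLast]
    rcases h with h | h | ⟨ha, hb⟩ | ⟨hb, ha⟩
    · exact ⟨a.castSucc, b.castSucc, by simp [pathGraph_adj, h],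
        contractZeroLast_castSucc t a, contractZeroLast_castSucc t b⟩
    · exact ⟨a.castSucc, b.castSucc, by simp [pathGraph_adj, h],
        contractZeroLast_castSucc t a, contractZeroLast_castSucc t b⟩
    · exact ⟨Fin.last (t + 2), b.castSucc, by simp [pathGraph_adj, hb],
        hlast.trans (Fin.ext ha.symm), contractZeroLast_castSucc t b⟩
    · exact ⟨a.castSucc, Fin.last (t + 2), by simp [pathGraph_adj, ha],
        contractZeroLast_castSucc t a, hlast.trans (Fin.ext hb.symm)⟩

theorem pathGraph_map_contractZeroTwo :
    (pathGraph (t + 3)).map (contractZeroTwo t) = pathGraph (t + 2) := by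
  ext a b
  rw [map_adj']
  constructor
  · rintro ⟨hne, x, y, hxy, rfl, rfl⟩
    rw [ne_eq, Fin.ext_iff] at hne
    simp only [pathGraph_adj, val_contractZeroTwo] at hxy hne ⊢
    split_ifs at hne ⊢ <;> omega
  · intro h
    exact ⟨h.ne, a.succ, b.succ, by simpa [pathGraph_adj] using h,
      contractZeroTwo_succ t a, contractZeroTwo_succ t b⟩

end Paths

section Recurrences

variable {U : Type*} [Fintype U] [DecidableEq U] (K : SimpleGraph U) (t k : ℕ)

theorem colS_pathGraph_union_eq_cycleGraph_add :
    colS (graphUnion (pathGraph (t + 3)) K) k =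
      colS (graphUnion (cycleGraph (t + 3)) K) k + colS (graphUnion (cycleGraph (t + 2)) K) k := by
  rw [cycleGraph_eq_pathGraph_sup_edge, ← pathGraph_map_contractZeroLast t]
  refine colS_graphUnion_eq_colS_sup_edge_add_colS_map _ K ?_ ?_
    (Function.LeftInverse.surjective (contractZeroLast_castSucc t))
    (fun _ _ => contractZeroLast_eq_iff t) k
  · simp [Fin.ext_iff]
  · simp [pathGraph_adj]

theorem colS_pathGraph_union_eq_Qgraph_add :
    colS (graphUnion (pathGraph (t + 3)) K) k =
      colS (graphUnion (Qgraph (t + 3)) K) k + colS (graphUnion (pathGraph (t + 2)) K) k := by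
  rw [Qgraph_eq_pathGraph_sup_edge, ← pathGraph_map_contractZeroTwo t]
  refine colS_graphUnion_eq_colS_sup_edge_add_colS_map _ K ?_ ?_
    (Function.LeftInverse.surjective (contractZeroTwo_succ t))
    (fun _ _ => contractZeroTwo_eq_iff t) k
  · simp only [ne_eq, Fin.ext_iff, Fin.val_zero, Fin.val_two]
    omega
  · simp only [pathGraph_adj, Fin.val_zero, Fin.val_two]
    omega

theorem colS_cycleGraph_union_eq_sum (j : ℕ) :
    colS (graphUnion (cycleGraph (2 * j + 3)) K) k =
      ∑ i ∈ range (j + 1), colS (graphUnion (Qgraph (2 * i + 3)) K) k := by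
  induction j with
  | zero =>
    rw [sum_range_one, cycleGraph_eq_pathGraph_sup_edge 0, Qgraph_eq_pathGraph_sup_edge 0]
    rfl
  | succ j ih =>
    have h₁ : colS (graphUnion (pathGraph (2 * (j + 1) + 3)) K) k =
        colS (graphUnion (cycleGraph (2 * (j + 1) + 3)) K) k +
          colS (graphUnion (cycleGraph (2 * j + 4)) K) k :=
      colS_pathGraph_union_eq_cycleGraph_add K (2 * j + 2) k
    have h₂ : colS (graphUnion (pathGraph (2 * j + 4)) K) k =
        colS (graphUnion (cycleGraph (2 * j + 4)) K) k +
          colS (graphUnion (cycleGraph (2 * j + 3)) K) k :=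
      colS_pathGraph_union_eq_cycleGraph_add K (2 * j + 1) k
    have h₃ : colS (graphUnion (pathGraph (2 * (j + 1) + 3)) K) k =
        colS (graphUnion (Qgraph (2 * (j + 1) + 3)) K) k +
          colS (graphUnion (pathGraph (2 * j + 4)) K) k :=
      colS_pathGraph_union_eq_Qgraph_add K (2 * j + 2) k
    rw [sum_range_succ, ← ih]
    omega

end Recurrences

theorem stmt18_general (n p k : ℕ) (hn : 3 ≤ n) (hodd : Odd n) :
    colS (graphUnion (SimpleGraph.cycleGraph n) (⊥ : SimpleGraph (Fin p))) k =
      ∑ i ∈ Finset.range ((n - 3) / 2 + 1),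
        colS (graphUnion (Qgraph (2 * i + 3)) (⊥ : SimpleGraph (Fin p))) k := by
  obtain ⟨j, rfl⟩ : ∃ j, n = 2 * j + 3 := by
    obtain ⟨m, rfl⟩ := hodd
    exact ⟨m - 1, by omega⟩
  rw [show (2 * j + 3 - 3) / 2 = j by omega]
  exact colS_cycleGraph_union_eq_sum _ k j

theorem stmt18 (n p k : ℕ) (hn : 3 ≤ n) (hodd : Odd n) (hk1 : 1 ≤ k) (hk2 : k ≤ n + p) :
    colS (graphUnion (SimpleGraph.cycleGraph n) (⊥ : SimpleGraph (Fin p))) k =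
      ∑ i ∈ Finset.range ((n - 3) / 2 + 1),
        colS (graphUnion (Qgraph (2 * i + 3)) (⊥ : SimpleGraph (Fin p))) k :=
  stmt18_general n p k hn hodd
end
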